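/- arXiv:2601.14778 — 3 statements merged into one kernel-verified Lean document; each statement's English description precedes it below -/
import Mathlib

section
/- Let p : Fin n → ℝ be a probability distribution (p i ≥ 0, ∑ p i = 1) and ℓ a natural number such that for every i, p i ≤ 2^(-ℓ). Then for any r ∈ [0,1), the 2^ℓ shifted values r_m = (r + m/2^ℓ) mod 1 for m ∈ Fin (2^ℓ) fall into pairwise distinct cells of the partition of [0,1) induced by the cumulative sums of p, i.e., the function mapping m to the index i with ∑_{j<i} p j ≤ r_m < ∑_{j≤i} p j is injective. -/
open Finset

/-- Decoding uniqueness: under the min-entropy condition `p i ≤ 2^(-ℓ)`, the `2^ℓ`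
shifted values `(r + m/2^ℓ) mod 1` fall into pairwise distinct cells of the
cumulative-sum partition of `[0,1)`, i.e. the map sending a message `m` to the
index `i` whose cell `[∑_{j<i} p j, ∑_{j≤i} p j)` contains the shifted value is
injective. -/
theorem messageDriven_sampling_injective
    {n : ℕ} (p : Fin n → ℝ) (ℓ : ℕ)
    (hp0 : ∀ i, 0 ≤ p i) (hp1 : ∑ i, p i = 1)
    (hcap : ∀ i, p i ≤ (2:ℝ) ^ (-(ℓ:ℝ)))
    (r : ℝ) (hr : r ∈ Set.Ico (0:ℝ) 1) :
    ∀ (m₁ m₂ : Fin (2 ^ ℓ)) (i : Fin n),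
      (∑ j ∈ Finset.univ.filter (fun j => j < i), p j
          ≤ Int.fract (r + (m₁:ℝ) / 2 ^ ℓ)
        ∧ Int.fract (r + (m₁:ℝ) / 2 ^ ℓ)
          < ∑ j ∈ Finset.univ.filter (fun j => j < i), p j + p i) →
      (∑ j ∈ Finset.univ.filter (fun j => j < i), p j
          ≤ Int.fract (r + (m₂:ℝ) / 2 ^ ℓ)
        ∧ Int.fract (r + (m₂:ℝ) / 2 ^ ℓ)
          < ∑ j ∈ Finset.univ.filter (fun j => j < i), p j + p i) →
      m₁ = m₂ := by
  intro m₁ m₂ i h₁ h₂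
  have hpow : (0:ℝ) < 2 ^ ℓ := by positivity
  have hcap' : p i ≤ ((2:ℝ) ^ ℓ)⁻¹ := by
    have h := hcap i
    rwa [Real.rpow_neg (by norm_num), Real.rpow_natCast] at h
  set a₁ := r + (m₁:ℝ) / 2 ^ ℓ with ha₁
  set a₂ := r + (m₂:ℝ) / 2 ^ ℓ with ha₂
  have hd : |Int.fract a₁ - Int.fract a₂| < p i := by
    rw [abs_sub_lt_iff]
    constructor <;> linarith [h₁.1, h₁.2, h₂.1, h₂.2]
  have key : (((m₁:ℤ) - m₂ - 2 ^ ℓ * (⌊a₁⌋ - ⌊a₂⌋) : ℤ) : ℝ)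
      = 2 ^ ℓ * (Int.fract a₁ - Int.fract a₂) := by
    simp only [Int.fract, ha₁, ha₂]
    push_cast
    field_simp
    ring
  have habs : |(((m₁:ℤ) - m₂ - 2 ^ ℓ * (⌊a₁⌋ - ⌊a₂⌋) : ℤ) : ℝ)| < 1 := by
    rw [key, abs_mul, abs_of_pos hpow]
    calc 2 ^ ℓ * |Int.fract a₁ - Int.fract a₂| < 2 ^ ℓ * p i := by
          exact mul_lt_mul_of_pos_left hd hpow
      _ ≤ 2 ^ ℓ * ((2:ℝ) ^ ℓ)⁻¹ := by
          exact mul_le_mul_of_nonneg_left hcap' (le_of_lt hpow)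
      _ = 1 := mul_inv_cancel₀ (ne_of_gt hpow)
  have hz : (m₁:ℤ) - m₂ - 2 ^ ℓ * (⌊a₁⌋ - ⌊a₂⌋) = 0 := by
    have h' : |(m₁:ℤ) - m₂ - 2 ^ ℓ * (⌊a₁⌋ - ⌊a₂⌋)| < 1 := by exact_mod_cast habs
    exact Int.abs_lt_one_iff.mp h' 
  have hm₁ : (m₁:ℤ) < 2 ^ ℓ := by exact_mod_cast m₁.isLt
  have hm₂ : (m₂:ℤ) < 2 ^ ℓ := by exact_mod_cast m₂.isLt
  have h0₁ : (0:ℤ) ≤ m₁ := Int.ofNat_nonneg _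
  have h0₂ : (0:ℤ) ≤ m₂ := Int.ofNat_nonneg _
  have hN : (0:ℤ) < 2 ^ ℓ := by positivity
  set z := ⌊a₁⌋ - ⌊a₂⌋ with hzdef
  have hz0 : z = 0 := by
    rcases lt_trichotomy z 0 with h | h | h
    · have : z ≤ -1 := by omega
      nlinarith
    · exact h
    · have : 1 ≤ z := by omega
      nlinarith
  rw [hz0] at hz
  have : (m₁:ℤ) = m₂ := by omega
  exact Fin.ext (by exact_mod_cast this)
end

section
/- Let p : Fin n → ℝ be a probability distribution with max_i p i ≤ 2^(-ℓ). If two points r₁, r₂ ∈ [0,1) lie in the same cell of the cumulative-sum partition of p (i.e., Sample_p(r₁) = Sample_p(r₂)), then the distance between r₁ and r₂ on the circle ℝ/ℤ is strictly less than 2^(-ℓ). -/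
open Finset

/-- If two points of `[0,1)` lie in the same cell of the cumulative-sum partition of a
probability distribution whose maximum probability is at most `2^(-ℓ)`, then their
distance on the circle `ℝ/ℤ`, i.e. `min (|r₁ - r₂|) (1 - |r₁ - r₂|)`, is strictly
less than `2^(-ℓ)`. -/
theorem same_cell_circle_dist_lt
    {n : ℕ} (p : Fin n → ℝ) (ℓ : ℕ)
    (hp0 : ∀ i, 0 ≤ p i) (hp1 : ∑ i, p i = 1)
    (hcap : ∀ i, p i ≤ (2:ℝ) ^ (-(ℓ:ℝ)))
    (r₁ r₂ : ℝ) (hr₁ : r₁ ∈ Set.Ico (0:ℝ) 1) (hr₂ : r₂ ∈ Set.Ico (0:ℝ) 1)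
    (i : Fin n)
    (h₁ : ∑ j ∈ Finset.univ.filter (fun j => j < i), p j ≤ r₁
        ∧ r₁ < ∑ j ∈ Finset.univ.filter (fun j => j < i), p j + p i)
    (h₂ : ∑ j ∈ Finset.univ.filter (fun j => j < i), p j ≤ r₂
        ∧ r₂ < ∑ j ∈ Finset.univ.filter (fun j => j < i), p j + p i) :
    min |r₁ - r₂| (1 - |r₁ - r₂|) < (2:ℝ) ^ (-(ℓ:ℝ)) := by
  have habs : |r₁ - r₂| < p i := by
    rw [abs_sub_lt_iff]
    constructor <;> linarith [h₁.1, h₁.2, h₂.1, h₂.2]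
  calc min |r₁ - r₂| (1 - |r₁ - r₂|) ≤ |r₁ - r₂| := min_le_left _ _
    _ < p i := habs
    _ ≤ _ := hcap i
end

section
/- Let p : Fin n → ℝ be a probability distribution, r uniform on [0,1), and ℓ ∈ ℕ. For a fixed message m ∈ Fin (2^ℓ), the distribution of the token Sample_p((r + m/2^ℓ) mod 1) is exactly p, i.e., for every i, Pr[Sample_p((r + m/2^ℓ) mod 1) = i] = p i. -/
open MeasureTheory Finset

/-- Perfect security of message-driven sampling in the ideal-randomness model:
for `r` uniform on `[0,1)` and any fixed message `m ∈ Fin (2^ℓ)`, the probability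
that the shifted value `(r + m/2^ℓ) mod 1` falls in the cumulative cell of token `i`
(i.e. that `Sample_p((r + m/2^ℓ) mod 1) = i`) is exactly `p i`. -/
theorem messageDriven_sampling_distribution
    {n : ℕ} (p : Fin n → ℝ) (hp0 : ∀ i, 0 ≤ p i) (hp1 : ∑ i, p i = 1)
    (ℓ : ℕ) (m : Fin (2 ^ ℓ)) (i : Fin n) :
    volume {r : ℝ | r ∈ Set.Ico (0:ℝ) 1 ∧
        ∑ j ∈ Finset.univ.filter (fun j => j < i), p j
          ≤ Int.fract (r + (m:ℝ) / 2 ^ ℓ) ∧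
        Int.fract (r + (m:ℝ) / 2 ^ ℓ)
          < ∑ j ∈ Finset.univ.filter (fun j => j < i), p j + p i}
      = ENNReal.ofReal (p i) := by
  set c : ℝ := (m : ℝ) / 2 ^ ℓ with hc
  set a : ℝ := ∑ j ∈ Finset.univ.filter (fun j => j < i), p j with ha
  have hpib : a + p i = a + p i := rfl
  set b : ℝ := a + p i with hb
  have hc0 : 0 ≤ c := by positivity
  have hc1 : c < 1 := by
    rw [hc, div_lt_one (by positivity)]
    exact_mod_cast m.2
  have ha0 : 0 ≤ a := Finset.sum_nonneg fun j _ => hp0 j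
  have hab : a ≤ b := by simpa [hb] using hp0 i
  have hb1 : b ≤ 1 := by
    have hins : b = ∑ j ∈ insert i (Finset.univ.filter (fun j => j < i)), p j := by
      rw [Finset.sum_insert (by simp)]
      rw [hb, ha]; ring
    rw [hins, ← hp1]
    exact Finset.sum_le_sum_of_subset_of_nonneg (Finset.subset_univ _)
      (fun j _ _ => hp0 j)
  have hS : {r : ℝ | r ∈ Set.Ico (0:ℝ) 1 ∧ a ≤ Int.fract (r + c) ∧ Int.fract (r + c) < b}
      = Set.Ico (max 0 (a - c)) (b - c) ∪ Set.Ico (a + 1 - c) (min 1 (b + 1 - c)) := by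
    ext r
    simp only [Set.mem_setOf_eq, Set.mem_Ico, Set.mem_union, max_le_iff, lt_min_iff]
    constructor
    · rintro ⟨⟨hr0, hr1⟩, hfa, hfb⟩
      rcases lt_or_ge (r + c) 1 with h | h
      · have hf : Int.fract (r + c) = r + c :=
          Int.fract_eq_self.2 ⟨by linarith, h⟩
        rw [hf] at hfa hfb
        exact Or.inl ⟨⟨hr0, by linarith⟩, by linarith⟩
      · have hfl : ⌊r + c⌋ = 1 := by
          apply Int.floor_eq_iff.2
          constructor <;> push_cast <;> linarith
        have hf : Int.fract (r + c) = r + c - 1 := by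
          rw [Int.fract, hfl]; push_cast; ring
        rw [hf] at hfa hfb
        exact Or.inr ⟨by linarith, hr1, by linarith⟩
    · rintro (⟨⟨hr0, hrac⟩, hru⟩ | ⟨hrl, hr1, hru⟩)
      · have hr1 : r < 1 := by linarith
        have hf : Int.fract (r + c) = r + c :=
          Int.fract_eq_self.2 ⟨by linarith, by linarith⟩
        exact ⟨⟨hr0, hr1⟩, by rw [hf]; constructor <;> linarith⟩
      · have hr0 : 0 ≤ r := by linarith
        have hfl : ⌊r + c⌋ = 1 := by
          apply Int.floor_eq_iff.2
          constructor <;> push_cast <;> linarith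
        have hf : Int.fract (r + c) = r + c - 1 := by
          rw [Int.fract, hfl]; push_cast; ring
        exact ⟨⟨hr0, hr1⟩, by rw [hf]; constructor <;> linarith⟩
  rw [show {r : ℝ | r ∈ Set.Ico (0:ℝ) 1 ∧ a ≤ Int.fract (r + c) ∧ Int.fract (r + c) < b}
      = Set.Ico (max 0 (a - c)) (b - c) ∪ Set.Ico (a + 1 - c) (min 1 (b + 1 - c)) from hS]
  have hdisj : Disjoint (Set.Ico (max 0 (a - c)) (b - c))
      (Set.Ico (a + 1 - c) (min 1 (b + 1 - c))) := by
    rw [Set.disjoint_left]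
    rintro r ⟨_, hru⟩ ⟨hrl, _⟩
    linarith
  rw [measure_union hdisj measurableSet_Ico, Real.volume_Ico, Real.volume_Ico]
  rcases le_or_gt c a with h1 | h1
  · rw [max_eq_right (by linarith : (0:ℝ) ≤ a - c),
      min_eq_left (by linarith : (1:ℝ) ≤ b + 1 - c)]
    have h2 : (1 : ℝ) - (a + 1 - c) ≤ 0 := by linarith
    rw [ENNReal.ofReal_eq_zero.2 h2, add_zero]
    congr 1; ring
  · rcases le_or_gt c b with h2 | h2
    · rw [max_eq_left (by linarith : a - c ≤ (0:ℝ)),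
        min_eq_left (by linarith : (1:ℝ) ≤ b + 1 - c)]
      rw [← ENNReal.ofReal_add (by linarith) (by linarith)]
      congr 1; ring
    · rw [max_eq_left (by linarith : a - c ≤ (0:ℝ)),
        min_eq_right (by linarith : b + 1 - c ≤ (1:ℝ))]
      rw [ENNReal.ofReal_eq_zero.2 (by linarith : b - c - 0 ≤ 0), zero_add]
      congr 1; ring
end
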